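/- arXiv:1801.05257 — 2 statements merged into one kernel-verified Lean document; each statement's English description precedes it below -/
import Mathlib

section
/- Let α, β, γ ∈ ℂ be pairwise distinct, let p(x,y) := (x−αy)(x−βy)(x−γy), and let h := ⟨p,p⟩_2, a binary quadratic. Then h ≠ 0 and h lies in each of the three 2-dimensional subspaces of the space of binary quadratics: span_ℂ{(x−αy)(x−βy), (x−γy)^2}, span_ℂ{(x−αy)(x−γy), (x−βy)^2}, and span_ℂ{(x−βy)(x−γy), (x−αy)^2}. Consequently, in the projective plane ℙ(Sym^2(ℂ^2)), the three lines joining each vertex of the triangle with vertices [(x−αy)(x−βy)], [(x−αy)(x−γy)], [(x−βy)(x−γy)] to the opposite tangency point [(x−γy)^2], [(x−βy)^2], [(x−αy)^2] respectively all pass through the single point [h]: the Gergonne point is the image of p under the quadratic map Q(p) = ⟨p,p⟩_2. -/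
/-! The second transvectant of a form with itself is twice its Hessian. For `p = ℓ_α ℓ_β ℓ_γ`
with `ℓ_a = x - a y` this gives `⟨p,p⟩₂ = -8(α-γ)(β-γ) ℓ_α ℓ_β - 8(α-β)² ℓ_γ²`, and since `p`
is symmetric in its three factors, permuting the roots puts `⟨p,p⟩₂` in the other two spans.
Evaluating at `(γ, 1)`, the root of `ℓ_γ`, leaves `-8((α-γ)(β-γ))² ≠ 0`. -/

open MvPolynomial

/-- Partial derivative with respect to the first variable `x = X 0`. -/
noncomputable def dX : MvPolynomial (Fin 2) ℂ → MvPolynomial (Fin 2) ℂ :=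
  fun f => MvPolynomial.pderiv (0 : Fin 2) f

/-- Partial derivative with respect to the second variable `y = X 1`. -/
noncomputable def dY : MvPolynomial (Fin 2) ℂ → MvPolynomial (Fin 2) ℂ :=
  fun f => MvPolynomial.pderiv (1 : Fin 2) f

/-- The `k`-th transvectant
`⟨φ,ψ⟩_k = Σ_{j=0}^{k} (−1)^j (k choose j) (∂^k φ/∂x^{k−j}∂y^j)·(∂^k ψ/∂x^j ∂y^{k−j})`. -/
noncomputable def transvectant (k : ℕ) (φ ψ : MvPolynomial (Fin 2) ℂ) :
    MvPolynomial (Fin 2) ℂ :=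
  ∑ j ∈ Finset.range (k + 1),
    ((-1 : ℂ) ^ j * (k.choose j : ℂ)) •
      (dX^[k - j] (dY^[j] φ) * dX^[j] (dY^[k - j] ψ))

noncomputable def linForm (a : ℂ) : MvPolynomial (Fin 2) ℂ := X 0 - C a * X 1

@[simp] lemma pderiv_zero_linForm (a : ℂ) : pderiv 0 (linForm a) = 1 := by
  simp [linForm]

@[simp] lemma pderiv_one_linForm (a : ℂ) : pderiv 1 (linForm a) = -C a := by
  simp [linForm]

lemma eval_linForm (v : Fin 2 → ℂ) (a : ℂ) : eval v (linForm a) = v 0 - a * v 1 := by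
  simp [linForm]

lemma transvectant_two_self (φ : MvPolynomial (Fin 2) ℂ) :
    transvectant 2 φ φ = 2 * (dX (dX φ) * dY (dY φ) - dX (dY φ) ^ 2) := by
  simp only [transvectant, Finset.sum_range_succ, Finset.range_one, Finset.sum_singleton,
    Nat.reduceAdd, Nat.reduceSub, Nat.choose_zero_right, Nat.choose_one_right, Nat.choose_self,
    Function.iterate_zero, Function.iterate_succ, Function.comp_apply, id_eq]
  simp only [smul_eq_C_mul, map_mul, map_pow, map_neg, map_one, map_natCast]
  ring

lemma transvectant_two_linForm_mul (a b c : ℂ) :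
    transvectant 2 (linForm a * linForm b * linForm c) (linForm a * linForm b * linForm c) =
      (-8 * (a - c) * (b - c)) • (linForm a * linForm b) + (-8 * (a - b) ^ 2) • linForm c ^ 2 := by
  simp only [transvectant_two_self, dX, dY, Derivation.leibniz, smul_eq_mul, map_add, map_neg,
    pderiv_zero_linForm, pderiv_one_linForm, pderiv_C, Derivation.map_one_eq_zero]
  simp only [linForm, smul_eq_C_mul, map_mul, map_sub, map_neg, map_pow, map_ofNat]
  ring

lemma transvectant_two_linForm_mul_mem_span (a b c : ℂ) :
    transvectant 2 (linForm a * linForm b * linForm c) (linForm a * linForm b * linForm c) ∈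
      Submodule.span ℂ {linForm a * linForm b, linForm c ^ 2} :=
  Submodule.mem_span_pair.2 ⟨_, _, (transvectant_two_linForm_mul a b c).symm⟩

lemma transvectant_two_linForm_mul_ne_zero {a b c : ℂ} (hac : a ≠ c) (hbc : b ≠ c) :
    transvectant 2 (linForm a * linForm b * linForm c) (linForm a * linForm b * linForm c) ≠ 0 := by
  intro h0
  have hval := congrArg (eval ![c, 1]) ((transvectant_two_linForm_mul a b c).symm.trans h0)
  simp only [smul_eq_C_mul, map_add, map_mul, map_pow, map_zero, eval_C, eval_linForm,
    Matrix.cons_val_zero, Matrix.cons_val_one] at hval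
  have hsq : ((a - c) * (b - c)) ^ 2 = 0 := by linear_combination (-1 / 8 : ℂ) * hval
  exact mul_ne_zero (sub_ne_zero.2 hac) (sub_ne_zero.2 hbc) (pow_eq_zero_iff two_ne_zero |>.1 hsq)

theorem gergonne_point_general
    (α β γ : ℂ) (hαγ : α ≠ γ) (hβγ : β ≠ γ)
    (p h : MvPolynomial (Fin 2) ℂ)
    (hpdef : p = (X 0 - C α * X 1) * (X 0 - C β * X 1) * (X 0 - C γ * X 1))
    (hhdef : h = transvectant 2 p p) :
    h ≠ 0 ∧
    h ∈ Submodule.span ℂ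
        ({(X 0 - C α * X 1) * (X 0 - C β * X 1), (X 0 - C γ * X 1) ^ 2} :
          Set (MvPolynomial (Fin 2) ℂ)) ∧
    h ∈ Submodule.span ℂ
        ({(X 0 - C α * X 1) * (X 0 - C γ * X 1), (X 0 - C β * X 1) ^ 2} :
          Set (MvPolynomial (Fin 2) ℂ)) ∧
    h ∈ Submodule.span ℂ
        ({(X 0 - C β * X 1) * (X 0 - C γ * X 1), (X 0 - C α * X 1) ^ 2} :
          Set (MvPolynomial (Fin 2) ℂ)) := by
  change p = linForm α * linForm β * linForm γ at hpdef
  subst hpdef hhdef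
  refine ⟨transvectant_two_linForm_mul_ne_zero hαγ hβγ,
    transvectant_two_linForm_mul_mem_span α β γ, ?_, ?_⟩
  · rw [mul_right_comm (linForm α)]
    exact transvectant_two_linForm_mul_mem_span α γ β
  · rw [mul_rotate (linForm α)]
    exact transvectant_two_linForm_mul_mem_span β γ α

/-- The Gergonne point: for pairwise distinct `α, β, γ` and
`p = (x−αy)(x−βy)(x−γy)`, the quadratic `h = ⟨p,p⟩₂` is nonzero and lies in each of the
three 2-dimensional subspaces `span{(x−αy)(x−βy), (x−γy)²}`,
`span{(x−αy)(x−γy), (x−βy)²}` and `span{(x−βy)(x−γy), (x−αy)²}`. -/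
theorem gergonne_point
    (α β γ : ℂ) (hαβ : α ≠ β) (hαγ : α ≠ γ) (hβγ : β ≠ γ)
    (p h : MvPolynomial (Fin 2) ℂ)
    (hpdef : p = (X 0 - C α * X 1) * (X 0 - C β * X 1) * (X 0 - C γ * X 1))
    (hhdef : h = transvectant 2 p p) :
    h ≠ 0 ∧
    h ∈ Submodule.span ℂ
        ({(X 0 - C α * X 1) * (X 0 - C β * X 1), (X 0 - C γ * X 1) ^ 2} :
          Set (MvPolynomial (Fin 2) ℂ)) ∧
    h ∈ Submodule.span ℂ
        ({(X 0 - C α * X 1) * (X 0 - C γ * X 1), (X 0 - C β * X 1) ^ 2} :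
          Set (MvPolynomial (Fin 2) ℂ)) ∧
    h ∈ Submodule.span ℂ
        ({(X 0 - C β * X 1) * (X 0 - C γ * X 1), (X 0 - C α * X 1) ^ 2} :
          Set (MvPolynomial (Fin 2) ℂ)) :=
  gergonne_point_general α β γ hαγ hβγ p h hpdef hhdef
end

section
/- Define the second-order differential operator Δ_g acting on smooth functions F : ℝ^5 → ℝ of the coordinates (a, b, p, q, r) by Δ_g F := (1/24)(∂²F/∂a² + ∂²F/∂b² − ∂²F/∂a∂b + 3·∂F/∂a) + (1/8)·e^{2b−2a}·(p²·∂²F/∂q² + ∂²F/∂r² + 2p·∂²F/∂r∂q + e^{−2a−4b}·∂²F/∂q² + e^{−6b}·∂²F/∂p²). Let K : (0,∞) × ℝ → ℝ be twice continuously differentiable and harmonic, i.e., ∂²K/∂u² + ∂²K/∂q² = 0, and set u(a,b,p) := √(p²·e^{2(b−a)} + e^{−2(2a+b)}). Then the function F(a,b,p,q,r) := (1/u(a,b,p))·e^{−2a}·K(u(a,b,p), q) satisfies Δ_g F = −F/12. -/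
/-!
Write `F = e^{-2a} G(u, q)` with `G = K / u`. A direct computation with the partial derivatives
of `u` (from `u² = p² e^{2(b-a)} + e^{-2(2a+b)}`) gives, for every `G` twice differentiable in
each variable,
`Δ_g (e^{-2a} G(u, q)) = e^{-2a} ((u²/8) (G_uu + (2/u) G_u + G_qq) - G/12)`,
i.e. on this ansatz `Δ_g + 1/12` is `(u²/8) e^{-2a}` times the Laplacian on `ℝ³ × ℝ` of
`(x, q) ↦ G(|x|, q)`. For `G = K/u` one has `G_uu + (2/u) G_u = K_uu/u`, so the bracket is
`(K_uu + K_qq)/u = 0`.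
-/

/-- Partial derivative of a function on `ℝ⁵` along the `i`-th coordinate direction. -/
noncomputable def pd5 (i : Fin 5) (F : (Fin 5 → ℝ) → ℝ) : (Fin 5 → ℝ) → ℝ :=
  fun v => deriv (fun t : ℝ => F (Function.update v i t)) (v i)

/-- The Laplace–Beltrami operator of the `SL(3,ℝ)`-invariant Einstein metric on the
space of conics, in the coordinates `(a, b, p, q, r) = (v 0, v 1, v 2, v 3, v 4)`:
`Δ_g F = (1/24)(F_aa + F_bb − F_ab + 3F_a)
  + (1/8)·e^{2b−2a}·(p²F_qq + F_rr + 2pF_rq + e^{−2a−4b}F_qq + e^{−6b}F_pp)`. -/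
noncomputable def laplaceG (F : (Fin 5 → ℝ) → ℝ) : (Fin 5 → ℝ) → ℝ := fun v =>
  (1 / 24) * (pd5 0 (pd5 0 F) v + pd5 1 (pd5 1 F) v - pd5 0 (pd5 1 F) v + 3 * pd5 0 F v)
    + (1 / 8) * Real.exp (2 * v 1 - 2 * v 0) *
        ((v 2) ^ 2 * pd5 3 (pd5 3 F) v + pd5 4 (pd5 4 F) v + 2 * v 2 * pd5 4 (pd5 3 F) v
          + Real.exp (-2 * v 0 - 4 * v 1) * pd5 3 (pd5 3 F) v
          + Real.exp (-6 * v 1) * pd5 2 (pd5 2 F) v)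

open Function

def HasCoordDeriv {ι : Type*} [DecidableEq ι] (i : ι) (f f' : (ι → ℝ) → ℝ) : Prop :=
  ∀ v, HasDerivAt (fun t => f (update v i t)) (f' v) (v i)

namespace HasCoordDeriv

variable {ι : Type*} [DecidableEq ι] {i : ι} {f g f' g' : (ι → ℝ) → ℝ}

theorem congr_deriv (h : HasCoordDeriv i f f') (e : ∀ v, f' v = g' v) : HasCoordDeriv i f g' :=
  fun v => (h v).congr_deriv (e v)

theorem add (hf : HasCoordDeriv i f f') (hg : HasCoordDeriv i g g') :
    HasCoordDeriv i (fun v => f v + g v) (fun v => f' v + g' v) :=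
  fun v => (hf v).add (hg v)

theorem sub (hf : HasCoordDeriv i f f') (hg : HasCoordDeriv i g g') :
    HasCoordDeriv i (fun v => f v - g v) (fun v => f' v - g' v) :=
  fun v => (hf v).sub (hg v)

theorem neg (hf : HasCoordDeriv i f f') : HasCoordDeriv i (fun v => -f v) (fun v => -f' v) :=
  fun v => (hf v).neg

theorem const_mul (c : ℝ) (hf : HasCoordDeriv i f f') :
    HasCoordDeriv i (fun v => c * f v) (fun v => c * f' v) :=
  fun v => (hf v).const_mul c

theorem mul (hf : HasCoordDeriv i f f') (hg : HasCoordDeriv i g g') :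
    HasCoordDeriv i (fun v => f v * g v) (fun v => f' v * g v + f v * g' v) :=
  fun v => by simpa only [update_eq_self] using (hf v).fun_mul (hg v)

theorem div (hf : HasCoordDeriv i f f') (hg : HasCoordDeriv i g g') (hg0 : ∀ v, g v ≠ 0) :
    HasCoordDeriv i (fun v => f v / g v) (fun v => (f' v * g v - f v * g' v) / g v ^ 2) :=
  fun v => by simpa only [update_eq_self] using (hf v).fun_div (hg v) (by simpa using hg0 v)

theorem pow (hf : HasCoordDeriv i f f') (n : ℕ) :
    HasCoordDeriv i (fun v => f v ^ n) (fun v => n * f v ^ (n - 1) * f' v) :=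
  fun v => by simpa only [update_eq_self] using (hf v).fun_pow n

theorem exp (hf : HasCoordDeriv i f f') :
    HasCoordDeriv i (fun v => Real.exp (f v)) (fun v => Real.exp (f v) * f' v) :=
  fun v => by simpa only [update_eq_self] using (hf v).exp

theorem sqrt (hf : HasCoordDeriv i f f') (hf0 : ∀ v, f v ≠ 0) :
    HasCoordDeriv i (fun v => √(f v)) (fun v => f' v / (2 * √(f v))) :=
  fun v => by simpa only [update_eq_self] using (hf v).sqrt (by simpa using hf0 v)

theorem comp_fst {k : ι} {m m' : (ι → ℝ) → ℝ} {Φ Φ' : ℝ → ℝ → ℝ}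
    (hΦ : ∀ x > 0, ∀ q, HasDerivAt (Φ · q) (Φ' x q) x) (hm : HasCoordDeriv i m m')
    (hm0 : ∀ v, 0 < m v) (hik : i ≠ k) :
    HasCoordDeriv i (fun v => Φ (m v) (v k)) (fun v => Φ' (m v) (v k) * m' v) := fun v => by
  have h := (hΦ _ (hm0 (update v i (v i))) (v k)).comp (v i) (hm v)
  simp only [update_eq_self] at h
  simpa only [update_of_ne (Ne.symm hik), Function.comp_def] using h

end HasCoordDeriv

theorem HasCoordDeriv.pd5_eq {i : Fin 5} {f f' : (Fin 5 → ℝ) → ℝ}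
    (h : HasCoordDeriv i f f') : pd5 i f = f' :=
  funext fun v => (h v).deriv

section

variable {ι : Type*} [DecidableEq ι]

theorem hasCoordDeriv_comp_snd {k : ι} {m : (ι → ℝ) → ℝ} {Φ Φ' : ℝ → ℝ → ℝ}
    (hΦ : ∀ x > 0, ∀ q, HasDerivAt (Φ x ·) (Φ' x q) q)
    (hm : ∀ v t, m (update v k t) = m v) (hm0 : ∀ v, 0 < m v) :
    HasCoordDeriv k (fun v => Φ (m v) (v k)) (fun v => Φ' (m v) (v k)) := fun v => by
  simpa only [hm, update_self] using hΦ _ (hm0 v) (v k)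

theorem hasCoordDeriv_apply_self (i : ι) : HasCoordDeriv i (fun v => v i) (fun _ => 1) :=
  fun v => by simpa using hasDerivAt_pi.1 (hasDerivAt_update v i (v i)) i

theorem hasCoordDeriv_apply_of_ne {i j : ι} (h : j ≠ i) :
    HasCoordDeriv i (fun v => v j) (fun _ => 0) :=
  fun v => by simpa [h] using hasDerivAt_pi.1 (hasDerivAt_update v i (v i)) j

theorem hasCoordDeriv_zero_of_update_eq {i : ι} {f : (ι → ℝ) → ℝ}
    (h : ∀ v t, f (update v i t) = f v) : HasCoordDeriv i f fun _ => 0 :=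
  fun v => by simpa only [h] using hasDerivAt_const (v i) (f v)

end

theorem pd5_eq_zero_of_update_eq {i : Fin 5} {f : (Fin 5 → ℝ) → ℝ}
    (h : ∀ v t, f (update v i t) = f v) : pd5 i f = fun _ => 0 :=
  (hasCoordDeriv_zero_of_update_eq h).pd5_eq

theorem pd5_update_eq {i : Fin 5} {f : (Fin 5 → ℝ) → ℝ}
    (h : ∀ v t, f (update v i t) = f v) (j : Fin 5) (v : Fin 5 → ℝ) (t : ℝ) :
    pd5 j f (update v i t) = pd5 j f v := by
  by_cases hij : j = i
  · subst hij
    rw [pd5_eq_zero_of_update_eq h]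
  · simp only [pd5, update_of_ne hij, update_comm (Ne.symm hij), h]

theorem ContDiffOn.hasDerivAt_deriv_of_isOpen {f : ℝ → ℝ} {s : Set ℝ} {x : ℝ}
    (hf : ContDiffOn ℝ 2 f s) (hs : IsOpen s) (hx : x ∈ s) :
    HasDerivAt (deriv f) (iteratedDeriv 2 f x) x := by
  rw [iteratedDeriv_succ, iteratedDeriv_one]
  exact (((hf.deriv_of_isOpen hs (m := 1) (by norm_num)).contDiffAt
    (hs.mem_nhds hx)).differentiableAt one_ne_zero).hasDerivAt

theorem HasDerivAt.div_id {f : ℝ → ℝ} {f' x : ℝ} (hf : HasDerivAt f f' x) (hx : x ≠ 0) :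
    HasDerivAt (fun y => f y / y) (f' / x - f x / x ^ 2) x :=
  (hf.fun_div (hasDerivAt_id' x) hx).congr_deriv (by field_simp)

theorem HasDerivAt.deriv_div_id {f f' : ℝ → ℝ} {f'' x : ℝ} (hf : HasDerivAt f (f' x) x)
    (hf' : HasDerivAt f' f'' x) (hx : x ≠ 0) :
    HasDerivAt (fun y => f' y / y - f y / y ^ 2) (f'' / x - 2 * f' x / x ^ 2 + 2 * f x / x ^ 3) x :=
  ((hf'.div_id hx).sub (hf.fun_div ((hasDerivAt_id' x).fun_pow 2) (pow_ne_zero 2 hx))).congr_deriv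
    (by field_simp; ring)

namespace Conic

noncomputable def A (v : Fin 5 → ℝ) : ℝ := Real.exp (2 * (v 1 - v 0))

noncomputable def B (v : Fin 5 → ℝ) : ℝ := Real.exp (-2 * (2 * v 0 + v 1))

noncomputable def u (v : Fin 5 → ℝ) : ℝ := √(v 2 ^ 2 * A v + B v)

theorem radicand_pos (v : Fin 5 → ℝ) : 0 < v 2 ^ 2 * A v + B v := by
  unfold A B
  positivity

theorem u_pos (v : Fin 5 → ℝ) : 0 < u v := Real.sqrt_pos.2 (radicand_pos v)

theorem u_sq (v : Fin 5 → ℝ) : u v ^ 2 = v 2 ^ 2 * A v + B v := Real.sq_sqrt (radicand_pos v).le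

theorem u_update {i : Fin 5} (hi : 3 ≤ i) (v : Fin 5 → ℝ) (t : ℝ) :
    u (update v i t) = u v := by
  fin_cases i <;> simp_all [u, A, B]

theorem hasCoordDeriv_A_zero : HasCoordDeriv 0 A (fun v => -2 * A v) :=
  ((((hasCoordDeriv_apply_of_ne (by decide)).sub (hasCoordDeriv_apply_self 0)).const_mul 2).exp
    ).congr_deriv fun v => by rw [A]; ring

theorem hasCoordDeriv_A_one : HasCoordDeriv 1 A (fun v => 2 * A v) :=
  ((((hasCoordDeriv_apply_self 1).sub (hasCoordDeriv_apply_of_ne (by decide))).const_mul 2).exp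
    ).congr_deriv fun v => by rw [A]; ring

theorem hasCoordDeriv_A_two : HasCoordDeriv 2 A (fun _ => 0) :=
  hasCoordDeriv_zero_of_update_eq fun v t => by simp [A]

theorem hasCoordDeriv_B_zero : HasCoordDeriv 0 B (fun v => -4 * B v) :=
  (((((hasCoordDeriv_apply_self 0).const_mul 2).add
    (hasCoordDeriv_apply_of_ne (by decide))).const_mul (-2)).exp).congr_deriv
      fun v => by rw [B]; ring

theorem hasCoordDeriv_B_one : HasCoordDeriv 1 B (fun v => -2 * B v) :=
  (((((hasCoordDeriv_apply_of_ne (by decide)).const_mul 2).add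
    (hasCoordDeriv_apply_self 1)).const_mul (-2)).exp).congr_deriv fun v => by rw [B]; ring

theorem hasCoordDeriv_B_two : HasCoordDeriv 2 B (fun _ => 0) :=
  hasCoordDeriv_zero_of_update_eq fun v t => by simp [B]

theorem hasCoordDeriv_u {i : Fin 5} {p' A' B' : (Fin 5 → ℝ) → ℝ}
    (hp : HasCoordDeriv i (fun v => v 2) p') (hA : HasCoordDeriv i A A')
    (hB : HasCoordDeriv i B B') :
    HasCoordDeriv i u (fun v => (2 * v 2 * p' v * A v + v 2 ^ 2 * A' v + B' v) / (2 * u v)) :=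
  ((((hp.pow 2).mul hA).add hB).sqrt fun v => (radicand_pos v).ne').congr_deriv
    fun v => by simp [u]

noncomputable def du0 (v : Fin 5 → ℝ) : ℝ := -(u v ^ 2 + B v) / u v

noncomputable def du1 (v : Fin 5 → ℝ) : ℝ := (u v ^ 2 - 2 * B v) / u v

noncomputable def du2 (v : Fin 5 → ℝ) : ℝ := v 2 * A v / u v

theorem hasCoordDeriv_u_zero : HasCoordDeriv 0 u du0 :=
  (hasCoordDeriv_u (hasCoordDeriv_apply_of_ne (by decide)) hasCoordDeriv_A_zero
    hasCoordDeriv_B_zero).congr_deriv fun v => by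
      have := (u_pos v).ne'
      rw [du0]
      field_simp
      linear_combination 2 * u_sq v

theorem hasCoordDeriv_u_one : HasCoordDeriv 1 u du1 :=
  (hasCoordDeriv_u (hasCoordDeriv_apply_of_ne (by decide)) hasCoordDeriv_A_one
    hasCoordDeriv_B_one).congr_deriv fun v => by
      have := (u_pos v).ne'
      rw [du1]
      field_simp
      linear_combination -u_sq v

theorem hasCoordDeriv_u_two : HasCoordDeriv 2 u du2 :=
  (hasCoordDeriv_u (hasCoordDeriv_apply_self 2) hasCoordDeriv_A_two
    hasCoordDeriv_B_two).congr_deriv fun v => by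
      have := (u_pos v).ne'
      rw [du2]
      field_simp
      ring

theorem hasCoordDeriv_du0_zero :
    HasCoordDeriv 0 du0 (fun v => (u v ^ 4 + 4 * B v * u v ^ 2 - B v ^ 2) / u v ^ 3) :=
  (((hasCoordDeriv_u_zero.pow 2).add hasCoordDeriv_B_zero).neg.div hasCoordDeriv_u_zero
    fun v => (u_pos v).ne').congr_deriv fun v => by
      have := (u_pos v).ne'
      rw [du0]
      field_simp
      ring

theorem hasCoordDeriv_du1_zero :
    HasCoordDeriv 0 du1 (fun v => (-u v ^ 4 + 5 * B v * u v ^ 2 - 2 * B v ^ 2) / u v ^ 3) :=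
  (((hasCoordDeriv_u_zero.pow 2).sub (hasCoordDeriv_B_zero.const_mul 2)).div hasCoordDeriv_u_zero
    fun v => (u_pos v).ne').congr_deriv fun v => by
      have := (u_pos v).ne'
      rw [du0]
      field_simp
      ring

theorem hasCoordDeriv_du1_one :
    HasCoordDeriv 1 du1 (fun v => (u v ^ 4 + 4 * B v * u v ^ 2 - 4 * B v ^ 2) / u v ^ 3) :=
  (((hasCoordDeriv_u_one.pow 2).sub (hasCoordDeriv_B_one.const_mul 2)).div hasCoordDeriv_u_one
    fun v => (u_pos v).ne').congr_deriv fun v => by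
      have := (u_pos v).ne'
      rw [du1]
      field_simp
      ring

theorem hasCoordDeriv_du2_two : HasCoordDeriv 2 du2 (fun v => A v * B v / u v ^ 3) :=
  (((hasCoordDeriv_apply_self 2).mul hasCoordDeriv_A_two).div hasCoordDeriv_u_two
    fun v => (u_pos v).ne').congr_deriv fun v => by
      have := (u_pos v).ne'
      rw [du2]
      field_simp
      linear_combination A v * u_sq v

theorem hasCoordDeriv_exp_zero :
    HasCoordDeriv 0 (fun v : Fin 5 → ℝ => Real.exp (-2 * v 0))
      (fun v => -2 * Real.exp (-2 * v 0)) :=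
  (((hasCoordDeriv_apply_self 0).const_mul (-2)).exp).congr_deriv fun v => by ring

theorem hasCoordDeriv_exp_of_ne {i : Fin 5} (h : i ≠ 0) :
    HasCoordDeriv i (fun v => Real.exp (-2 * v 0)) (fun _ => 0) :=
  hasCoordDeriv_zero_of_update_eq fun v t => by rw [update_of_ne (Ne.symm h)]

noncomputable def ansatz (G : ℝ → ℝ → ℝ) (v : Fin 5 → ℝ) : ℝ :=
  Real.exp (-2 * v 0) * G (u v) (v 3)

theorem ansatz_update_four {G : ℝ → ℝ → ℝ} (v : Fin 5 → ℝ) (t : ℝ) :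
    ansatz G (update v 4 t) = ansatz G v := by
  simp [ansatz, u_update]

theorem pd5_four_pd5_ansatz {G : ℝ → ℝ → ℝ} (j : Fin 5) :
    pd5 4 (pd5 j (ansatz G)) = fun _ => 0 :=
  pd5_eq_zero_of_update_eq (pd5_update_eq ansatz_update_four j)

section

variable {G G₁ G₁₁ G₂ G₂₂ : ℝ → ℝ → ℝ}
  (hG₁ : ∀ x > 0, ∀ q, HasDerivAt (G · q) (G₁ x q) x)
  (hG₁₁ : ∀ x > 0, ∀ q, HasDerivAt (G₁ · q) (G₁₁ x q) x)
  (hG₂ : ∀ x > 0, ∀ q, HasDerivAt (G x ·) (G₂ x q) q)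
  (hG₂₂ : ∀ x > 0, ∀ q, HasDerivAt (G₂ x ·) (G₂₂ x q) q)

include hG₂ hG₂₂ in
theorem pd5_three_pd5_three_ansatz (v : Fin 5 → ℝ) : pd5 3 (pd5 3 (ansatz G)) v =
    Real.exp (-2 * v 0) * G₂₂ (u v) (v 3) := by
  have hG : HasCoordDeriv 3 (ansatz G) (fun v => Real.exp (-2 * v 0) * G₂ (u v) (v 3)) :=
    ((hasCoordDeriv_exp_of_ne (by decide)).mul
      (hasCoordDeriv_comp_snd hG₂ (u_update (by decide)) u_pos)).congr_deriv fun v => by ring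
  have hG' := hasCoordDeriv_comp_snd (k := 3) hG₂₂ (u_update (by decide)) u_pos
  rw [hG.pd5_eq, ((hasCoordDeriv_exp_of_ne (by decide)).mul hG').pd5_eq]
  ring

include hG₁

theorem hasCoordDeriv_ansatz_zero : HasCoordDeriv 0 (ansatz G)
    (fun v => Real.exp (-2 * v 0) * (-2 * G (u v) (v 3) + G₁ (u v) (v 3) * du0 v)) :=
  (hasCoordDeriv_exp_zero.mul (hasCoordDeriv_u_zero.comp_fst hG₁ u_pos (by decide))).congr_deriv
    fun v => by ring

theorem hasCoordDeriv_ansatz_of_ne {i : Fin 5} {u' : (Fin 5 → ℝ) → ℝ}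
    (hu : HasCoordDeriv i u u') (h0 : i ≠ 0) (h3 : i ≠ 3) :
    HasCoordDeriv i (ansatz G) (fun v => Real.exp (-2 * v 0) * (G₁ (u v) (v 3) * u' v)) :=
  ((hasCoordDeriv_exp_of_ne h0).mul (hu.comp_fst hG₁ u_pos h3)).congr_deriv fun v => by ring

include hG₁₁

theorem pd5_zero_pd5_zero_ansatz (v : Fin 5 → ℝ) : pd5 0 (pd5 0 (ansatz G)) v =
    Real.exp (-2 * v 0) * (4 * G (u v) (v 3) - 4 * G₁ (u v) (v 3) * du0 v
      + G₁₁ (u v) (v 3) * du0 v ^ 2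
      + G₁ (u v) (v 3) * ((u v ^ 4 + 4 * B v * u v ^ 2 - B v ^ 2) / u v ^ 3)) := by
  have hG := hasCoordDeriv_u_zero.comp_fst (k := 3) hG₁ u_pos (by decide)
  have hG' := hasCoordDeriv_u_zero.comp_fst (k := 3) hG₁₁ u_pos (by decide)
  rw [(hasCoordDeriv_ansatz_zero hG₁).pd5_eq, (hasCoordDeriv_exp_zero.mul
    ((hG.const_mul (-2)).add (hG'.mul hasCoordDeriv_du0_zero))).pd5_eq]
  ring

theorem pd5_one_pd5_one_ansatz (v : Fin 5 → ℝ) : pd5 1 (pd5 1 (ansatz G)) v =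
    Real.exp (-2 * v 0) * (G₁₁ (u v) (v 3) * du1 v ^ 2
      + G₁ (u v) (v 3) * ((u v ^ 4 + 4 * B v * u v ^ 2 - 4 * B v ^ 2) / u v ^ 3)) := by
  have hG' := hasCoordDeriv_u_one.comp_fst (k := 3) hG₁₁ u_pos (by decide)
  rw [(hasCoordDeriv_ansatz_of_ne hG₁ hasCoordDeriv_u_one (by decide) (by decide)).pd5_eq,
    ((hasCoordDeriv_exp_of_ne (by decide)).mul (hG'.mul hasCoordDeriv_du1_one)).pd5_eq]
  ring

theorem pd5_zero_pd5_one_ansatz (v : Fin 5 → ℝ) : pd5 0 (pd5 1 (ansatz G)) v =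
    Real.exp (-2 * v 0) * (-2 * G₁ (u v) (v 3) * du1 v + G₁₁ (u v) (v 3) * du0 v * du1 v
      + G₁ (u v) (v 3) * ((-u v ^ 4 + 5 * B v * u v ^ 2 - 2 * B v ^ 2) / u v ^ 3)) := by
  have hG' := hasCoordDeriv_u_zero.comp_fst (k := 3) hG₁₁ u_pos (by decide)
  rw [(hasCoordDeriv_ansatz_of_ne hG₁ hasCoordDeriv_u_one (by decide) (by decide)).pd5_eq,
    (hasCoordDeriv_exp_zero.mul (hG'.mul hasCoordDeriv_du1_zero)).pd5_eq]
  ring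

theorem pd5_two_pd5_two_ansatz (v : Fin 5 → ℝ) : pd5 2 (pd5 2 (ansatz G)) v =
    Real.exp (-2 * v 0) *
      (G₁₁ (u v) (v 3) * du2 v ^ 2 + G₁ (u v) (v 3) * (A v * B v / u v ^ 3)) := by
  have hG' := hasCoordDeriv_u_two.comp_fst (k := 3) hG₁₁ u_pos (by decide)
  rw [(hasCoordDeriv_ansatz_of_ne hG₁ hasCoordDeriv_u_two (by decide) (by decide)).pd5_eq,
    ((hasCoordDeriv_exp_of_ne (by decide)).mul (hG'.mul hasCoordDeriv_du2_two)).pd5_eq]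
  ring

include hG₂ hG₂₂ in
theorem laplaceG_ansatz (v : Fin 5 → ℝ) : laplaceG (ansatz G) v = Real.exp (-2 * v 0) *
    (u v ^ 2 / 8 * (G₁₁ (u v) (v 3) + 2 / u v * G₁ (u v) (v 3) + G₂₂ (u v) (v 3))
      - G (u v) (v 3) / 12) := by
  have hA : Real.exp (2 * v 1 - 2 * v 0) = A v := by rw [A]; ring_nf
  have hBA : Real.exp (-2 * v 0 - 4 * v 1) = B v / A v := by
    rw [A, B, ← Real.exp_sub]; ring_nf
  have hBA2 : Real.exp (-6 * v 1) = B v / A v ^ 2 := by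
    rw [A, B, ← Real.exp_nat_mul, ← Real.exp_sub]; ring_nf
  have hB : B v = u v ^ 2 - v 2 ^ 2 * A v := by linear_combination -u_sq v
  have hu := (u_pos v).ne'
  have hA0 : A v ≠ 0 := (Real.exp_pos _).ne'
  rw [laplaceG, pd5_zero_pd5_zero_ansatz hG₁ hG₁₁, pd5_one_pd5_one_ansatz hG₁ hG₁₁,
    pd5_zero_pd5_one_ansatz hG₁ hG₁₁, pd5_two_pd5_two_ansatz hG₁ hG₁₁,
    pd5_three_pd5_three_ansatz hG₂ hG₂₂, pd5_four_pd5_ansatz, pd5_four_pd5_ansatz,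
    (hasCoordDeriv_ansatz_zero hG₁).pd5_eq, hA, hBA, hBA2]
  simp only [du0, du1, du2]
  rw [hB]
  field_simp
  ring

end

theorem laplaceG_ansatz_div {K : ℝ → ℝ → ℝ}
    (hK : ContDiffOn ℝ 2 (uncurry K) (Set.Ioi 0 ×ˢ Set.univ)) (v : Fin 5 → ℝ) :
    laplaceG (ansatz fun x q => K x q / x) v = Real.exp (-2 * v 0) *
      (u v / 8 * (iteratedDeriv 2 (K · (v 3)) (u v) + iteratedDeriv 2 (K (u v) ·) (v 3))
        - K (u v) (v 3) / (12 * u v)) := by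
  have hfst (q : ℝ) : ContDiffOn ℝ 2 (K · q) (Set.Ioi 0) :=
    hK.comp (contDiffOn_id.prodMk contDiffOn_const) fun _ hy => ⟨hy, trivial⟩
  have hsnd {x : ℝ} (hx : 0 < x) : ContDiff ℝ 2 (K x ·) := contDiffOn_univ.1 <|
    hK.comp (contDiffOn_const.prodMk contDiffOn_id) fun _ _ => ⟨hx, trivial⟩
  have hK₁ {x : ℝ} (hx : 0 < x) (q : ℝ) : HasDerivAt (K · q) (deriv (K · q) x) x :=
    (((hfst q).differentiableOn (by norm_num) x hx).differentiableAt
      (isOpen_Ioi.mem_nhds hx)).hasDerivAt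
  have hK₂ {x : ℝ} (hx : 0 < x) (q : ℝ) : HasDerivAt (K x ·) (deriv (K x ·) q) q :=
    ((hsnd hx).differentiable (by norm_num) q).hasDerivAt
  rw [laplaceG_ansatz (fun x hx q => (hK₁ hx q).div_id hx.ne')
    (fun x hx q => (hK₁ hx q).deriv_div_id
      ((hfst q).hasDerivAt_deriv_of_isOpen isOpen_Ioi hx) hx.ne')
    (fun x hx q => (hK₂ hx q).div_const x)
    (fun x hx q => ((hsnd hx).contDiffOn.hasDerivAt_deriv_of_isOpen isOpen_univ
      (Set.mem_univ q)).div_const x)]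
  have := (u_pos v).ne'
  field_simp
  ring

end Conic

/-- For a twice continuously differentiable harmonic function `K` on `(0,∞) × ℝ`
(`K_uu + K_qq = 0`), the function `F = (1/u)·e^{−2a}·K(u, q)` with
`u = √(p²e^{2(b−a)} + e^{−2(2a+b)})` satisfies `Δ_g F = −F/12`. -/
theorem harmonic_eigenfunctions (K : ℝ → ℝ → ℝ)
    (hK : ContDiffOn ℝ 2 (Function.uncurry K) (Set.Ioi (0 : ℝ) ×ˢ (Set.univ : Set ℝ)))
    (hharm : ∀ u ∈ Set.Ioi (0 : ℝ), ∀ q : ℝ,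
      iteratedDeriv 2 (fun u' => K u' q) u + iteratedDeriv 2 (fun q' => K u q') q = 0)
    (F : (Fin 5 → ℝ) → ℝ)
    (hF : ∀ v : Fin 5 → ℝ,
      F v = (1 / Real.sqrt ((v 2) ^ 2 * Real.exp (2 * (v 1 - v 0))
                + Real.exp (-2 * (2 * v 0 + v 1)))) *
            Real.exp (-2 * v 0) *
            K (Real.sqrt ((v 2) ^ 2 * Real.exp (2 * (v 1 - v 0))
                + Real.exp (-2 * (2 * v 0 + v 1)))) (v 3)) :
    ∀ v : Fin 5 → ℝ, laplaceG F v = -F v / 12 := by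
  have hF_ansatz : F = Conic.ansatz fun x q => K x q / x := funext fun v => by
    rw [hF v, Conic.ansatz, Conic.u, Conic.A, Conic.B]
    ring
  intro v
  rw [hF_ansatz, Conic.laplaceG_ansatz_div hK v, hharm _ (Conic.u_pos v) (v 3), Conic.ansatz]
  ring
end
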